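/- arXiv:1504.06767 — 5 statements merged into one kernel-verified Lean document; each statement's English description precedes it below -/
import Mathlib

section
/- The function π_ε(h_+, h_-) = log(2(e^ε cosh(h_+) + e^{-ε} cosh(h_-))) is strictly convex on ℝ², i.e., its Hessian matrix is positive definite at every point. -/
/-!
Write `C = a cosh x + b cosh y` with `a = 2e^ε`, `b = 2e^{-ε}`. The Hessian quadratic form of
`log C` in direction `d` is `N / C²` with
`N = (a cosh x d₁² + b cosh y d₂²) C - (a sinh x d₁ + b sinh y d₂)²`, and `cosh² - sinh² = 1`
together with the addition formulas give
`N = a² d₁² + b² d₂² + ab/2 (cosh (x + y) (d₁ - d₂)² + cosh (x - y) (d₁ + d₂)²) > 0`.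
Strict convexity follows by restricting to lines, where this is the second derivative.
-/

noncomputable def piE (ε h₁ h₂ : ℝ) : ℝ :=
  Real.log (2 * (Real.exp ε * Real.cosh h₁ + Real.exp (-ε) * Real.cosh h₂))

noncomputable def piE1 (ε : ℝ) (h : ℝ × ℝ) : ℝ := deriv (fun x => piE ε x h.2) h.1
noncomputable def piE2 (ε : ℝ) (h : ℝ × ℝ) : ℝ := deriv (fun y => piE ε h.1 y) h.2

/-- The Hessian matrix of `π_ε` at the point `h = (h₊, h₋)`. -/
noncomputable def hessPiE (ε : ℝ) (h : ℝ × ℝ) : Matrix (Fin 2) (Fin 2) ℝ :=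
  !![deriv (fun x => piE1 ε (x, h.2)) h.1, deriv (fun y => piE1 ε (h.1, y)) h.2;
     deriv (fun x => piE2 ε (x, h.2)) h.1, deriv (fun y => piE2 ε (h.1, y)) h.2]

open Real Set Matrix

theorem strictConvexOn_univ_of_forall_line {E : Type*} [AddCommGroup E] [Module ℝ E]
    {f : E → ℝ} (hf : ∀ p d : E, d ≠ 0 → StrictConvexOn ℝ univ fun t : ℝ => f (p + t • d)) :
    StrictConvexOn ℝ univ f := by
  refine ⟨convex_univ, fun x _ y _ hxy s t hs ht hst => ?_⟩
  have hline := (hf x (y - x) (sub_ne_zero.2 hxy.symm)).2 (mem_univ 0) (mem_univ 1)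
    zero_ne_one hs ht hst
  have hpoint : s • x + t • y = x + (s • 0 + t • 1 : ℝ) • (y - x) := by
    rw [eq_sub_of_add_eq hst]
    simp only [smul_eq_mul, mul_zero, mul_one, zero_add, sub_smul, one_smul, smul_sub]
    abel
  simpa only [hpoint, zero_smul, add_zero, one_smul, add_sub_cancel, smul_eq_mul] using hline

theorem hasDerivAt_add_mul (c v t : ℝ) : HasDerivAt (fun s => c + s * v) v t :=
  (hasDerivAt_mul_const v).const_add c

noncomputable def coshSum (a b : ℝ) (h : ℝ × ℝ) : ℝ := a * cosh h.1 + b * cosh h.2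

noncomputable def logCoshSum (a b : ℝ) (h : ℝ × ℝ) : ℝ := log (coshSum a b h)

noncomputable def sinhSum (a b : ℝ) (h d : ℝ × ℝ) : ℝ := a * sinh h.1 * d.1 + b * sinh h.2 * d.2

noncomputable def logCoshSumHess (a b : ℝ) (h e d : ℝ × ℝ) : ℝ :=
  ((a * cosh h.1 * e.1 * d.1 + b * cosh h.2 * e.2 * d.2) * coshSum a b h -
      sinhSum a b h e * sinhSum a b h d) / coshSum a b h ^ 2

section LogCoshSum

variable {a b : ℝ}

theorem logCoshSumHess_comm (h e d : ℝ × ℝ) :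
    logCoshSumHess a b h e d = logCoshSumHess a b h d e := by
  simp only [logCoshSumHess]
  ring

theorem hasDerivAt_coshSum_line (p d : ℝ × ℝ) (t : ℝ) :
    HasDerivAt (fun t => coshSum a b (p + t • d)) (sinhSum a b (p + t • d) d) t := by
  simp only [coshSum, sinhSum, Prod.fst_add, Prod.snd_add, Prod.smul_fst, Prod.smul_snd,
    smul_eq_mul]
  exact (((hasDerivAt_add_mul p.1 d.1 t).cosh.const_mul a).add
    ((hasDerivAt_add_mul p.2 d.2 t).cosh.const_mul b)).congr_deriv (by ring)

theorem hasDerivAt_sinhSum_line (p d e : ℝ × ℝ) (t : ℝ) :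
    HasDerivAt (fun t => sinhSum a b (p + t • d) e)
      (a * cosh (p + t • d).1 * e.1 * d.1 + b * cosh (p + t • d).2 * e.2 * d.2) t := by
  simp only [sinhSum, Prod.fst_add, Prod.snd_add, Prod.smul_fst, Prod.smul_snd, smul_eq_mul]
  exact ((((hasDerivAt_add_mul p.1 d.1 t).sinh.const_mul a).mul_const e.1).add
    (((hasDerivAt_add_mul p.2 d.2 t).sinh.const_mul b).mul_const e.2)).congr_deriv (by ring)

theorem coshSum_pos (ha : 0 < a) (hb : 0 < b) (h : ℝ × ℝ) : 0 < coshSum a b h := by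
  unfold coshSum
  positivity

theorem hasDerivAt_logCoshSum_line (ha : 0 < a) (hb : 0 < b) (p d : ℝ × ℝ) (t : ℝ) :
    HasDerivAt (fun t => logCoshSum a b (p + t • d))
      (sinhSum a b (p + t • d) d / coshSum a b (p + t • d)) t :=
  (hasDerivAt_coshSum_line p d t).log (coshSum_pos ha hb _).ne'

theorem hasDerivAt_sinhSum_div_coshSum_line (ha : 0 < a) (hb : 0 < b) (p d e : ℝ × ℝ)
    (t : ℝ) :
    HasDerivAt (fun t => sinhSum a b (p + t • d) e / coshSum a b (p + t • d))
      (logCoshSumHess a b (p + t • d) e d) t :=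
  (hasDerivAt_sinhSum_line p d e t).div (hasDerivAt_coshSum_line p d t)
    (coshSum_pos ha hb _).ne'

theorem logCoshSumHess_self_pos (ha : 0 < a) (hb : 0 < b) (h : ℝ × ℝ) {d : ℝ × ℝ}
    (hd : d ≠ 0) :
    0 < logCoshSumHess a b h d d := by
  obtain ⟨x, y⟩ := h
  obtain ⟨d₁, d₂⟩ := d
  have hnum : (a * cosh x * d₁ * d₁ + b * cosh y * d₂ * d₂) * (a * cosh x + b * cosh y) -
      (a * sinh x * d₁ + b * sinh y * d₂) * (a * sinh x * d₁ + b * sinh y * d₂) =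
        a ^ 2 * d₁ ^ 2 + b ^ 2 * d₂ ^ 2 +
          a * b / 2 * (cosh (x + y) * (d₁ - d₂) ^ 2 + cosh (x - y) * (d₁ + d₂) ^ 2) := by
    rw [cosh_add, cosh_sub]
    linear_combination a ^ 2 * d₁ ^ 2 * cosh_sq_sub_sinh_sq x +
      b ^ 2 * d₂ ^ 2 * cosh_sq_sub_sinh_sq y
  have hsq : 0 < a ^ 2 * d₁ ^ 2 + b ^ 2 * d₂ ^ 2 := by
    rcases not_and_or.1 (mt Prod.ext_iff.2 hd) with h₁ | h₂
    · have : 0 < a ^ 2 * d₁ ^ 2 := by simp only [Prod.fst_zero] at h₁; positivity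
      positivity
    · have : 0 < b ^ 2 * d₂ ^ 2 := by simp only [Prod.snd_zero] at h₂; positivity
      positivity
  unfold logCoshSumHess sinhSum coshSum
  rw [hnum]
  positivity

theorem strictConvexOn_logCoshSum (ha : 0 < a) (hb : 0 < b) :
    StrictConvexOn ℝ univ (logCoshSum a b) := by
  refine strictConvexOn_univ_of_forall_line fun p d hd => ?_
  have hderiv : deriv (fun t => logCoshSum a b (p + t • d)) =
      fun t => sinhSum a b (p + t • d) d / coshSum a b (p + t • d) :=
    funext fun t => (hasDerivAt_logCoshSum_line ha hb p d t).deriv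
  refine strictConvexOn_of_deriv2_pos convex_univ
    (fun t _ => (hasDerivAt_logCoshSum_line ha hb p d t).continuousAt.continuousWithinAt)
    fun t _ => ?_
  rw [Function.iterate_succ_apply, Function.iterate_one, hderiv,
    (hasDerivAt_sinhSum_div_coshSum_line ha hb p d d t).deriv]
  exact logCoshSumHess_self_pos ha hb _ hd

end LogCoshSum

theorem piE_eq_logCoshSum (ε x y : ℝ) :
    piE ε x y = logCoshSum (2 * exp ε) (2 * exp (-ε)) (x, y) := by
  rw [piE, logCoshSum, coshSum, mul_add, mul_assoc, mul_assoc]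

theorem horizontal_line_apply (t y : ℝ) : ((0, y) + t • (1, 0) : ℝ × ℝ) = (t, y) := by simp

theorem vertical_line_apply (x t : ℝ) : ((x, 0) + t • (0, 1) : ℝ × ℝ) = (x, t) := by simp

section PiE

theorem two_mul_exp_pos (r : ℝ) : 0 < 2 * exp r := by positivity

variable (ε : ℝ)

theorem piE1_eq (x y : ℝ) : piE1 ε (x, y) =
    sinhSum (2 * exp ε) (2 * exp (-ε)) (x, y) (1, 0) /
      coshSum (2 * exp ε) (2 * exp (-ε)) (x, y) := by
  have hline := hasDerivAt_logCoshSum_line (two_mul_exp_pos ε) (two_mul_exp_pos (-ε))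
    (0, y) (1, 0) x
  simp only [horizontal_line_apply] at hline
  simpa only [piE1, piE_eq_logCoshSum] using hline.deriv

theorem piE2_eq (x y : ℝ) : piE2 ε (x, y) =
    sinhSum (2 * exp ε) (2 * exp (-ε)) (x, y) (0, 1) /
      coshSum (2 * exp ε) (2 * exp (-ε)) (x, y) := by
  have hline := hasDerivAt_logCoshSum_line (two_mul_exp_pos ε) (two_mul_exp_pos (-ε))
    (x, 0) (0, 1) y
  simp only [vertical_line_apply] at hline
  simpa only [piE2, piE_eq_logCoshSum] using hline.deriv

theorem hessPiE_eq (h : ℝ × ℝ) :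
    hessPiE ε h = let H := logCoshSumHess (2 * exp ε) (2 * exp (-ε)) h
      !![H (1, 0) (1, 0), H (1, 0) (0, 1); H (0, 1) (1, 0), H (0, 1) (0, 1)] := by
  obtain ⟨x, y⟩ := h
  have hA := two_mul_exp_pos ε
  have hB := two_mul_exp_pos (-ε)
  have h₁ := fun e => hasDerivAt_sinhSum_div_coshSum_line hA hB (0, y) (1, 0) e x
  have h₂ := fun e => hasDerivAt_sinhSum_div_coshSum_line hA hB (x, 0) (0, 1) e y
  simp only [horizontal_line_apply, vertical_line_apply] at h₁ h₂
  simp only [hessPiE, piE1_eq, piE2_eq, (h₁ _).deriv, (h₂ _).deriv]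

theorem posDef_hessPiE (h : ℝ × ℝ) : (hessPiE ε h).PosDef := by
  set H := logCoshSumHess (2 * exp ε) (2 * exp (-ε)) h
  rw [hessPiE_eq]
  refine PosDef.of_dotProduct_mulVec_pos ?_ fun v hv => ?_
  · ext i j
    fin_cases i <;> fin_cases j <;> simp [logCoshSumHess_comm h (0, 1) (1, 0)]
  · have hquad : star v ⬝ᵥ (!![H (1, 0) (1, 0), H (1, 0) (0, 1); H (0, 1) (1, 0),
        H (0, 1) (0, 1)] *ᵥ v) = H (v 0, v 1) (v 0, v 1) := by
      simp only [H, logCoshSumHess, sinhSum, star_trivial, dotProduct, Fin.sum_univ_two,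
        Matrix.mulVec, Matrix.of_apply, Matrix.cons_val', Matrix.cons_val_zero,
        Matrix.cons_val_one, Matrix.empty_val', Matrix.cons_val_fin_one]
      ring
    have hv' : (v 0, v 1) ≠ 0 := fun h0 => hv (by
      ext i; fin_cases i
      exacts [congrArg Prod.fst h0, congrArg Prod.snd h0])
    rw [hquad]
    exact logCoshSumHess_self_pos (two_mul_exp_pos ε) (two_mul_exp_pos (-ε)) h hv'

end PiE

theorem piE_strictConvex_and_hessian_posDef_general (ε : ℝ) :
    StrictConvexOn ℝ Set.univ (fun h : ℝ × ℝ => piE ε h.1 h.2) ∧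
      ∀ h : ℝ × ℝ, (hessPiE ε h).PosDef := by
  refine ⟨?_, posDef_hessPiE ε⟩
  simpa only [piE_eq_logCoshSum] using
    strictConvexOn_logCoshSum (two_mul_exp_pos ε) (two_mul_exp_pos (-ε))

theorem piE_strictConvex_and_hessian_posDef (ε : ℝ) (hε : 0 ≤ ε) :
    StrictConvexOn ℝ Set.univ (fun h : ℝ × ℝ => piE ε h.1 h.2) ∧
      ∀ h : ℝ × ℝ, (hessPiE ε h).PosDef :=
  piE_strictConvex_and_hessian_posDef_general ε
end

section
/- For any x ∈ ℝ and any ε ≥ 0, the only real solution y of the equation y = 2e^{-ε} sinh(y) / (e^ε cosh(x) + e^{-ε} cosh(y)) is y = 0. -/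
open Real

lemma sinh_lt_mul_cosh {s : ℝ} (hs : 0 < s) : Real.sinh s < s * Real.cosh s := by
  have h : StrictMonoOn (fun t : ℝ => t * Real.cosh t - Real.sinh t) (Set.Ici 0) := by
    refine strictMonoOn_of_deriv_pos (convex_Ici _) ?_ fun t ht => ?_
    · exact ((continuous_id.mul Real.continuous_cosh).sub Real.continuous_sinh).continuousOn
    · rw [interior_Ici, Set.mem_Ioi] at ht
      have : HasDerivAt (fun t : ℝ => t * Real.cosh t - Real.sinh t)
          (1 * Real.cosh t + t * Real.sinh t - Real.cosh t) t :=
        ((hasDerivAt_id t).mul (Real.hasDerivAt_cosh t)).sub (Real.hasDerivAt_sinh t)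
      rw [this.deriv]
      have := Real.sinh_pos_iff.2 ht
      nlinarith
  have := h (Set.self_mem_Ici) (Set.mem_Ici.2 hs.le) hs
  simpa using this

lemma two_sinh_lt {t : ℝ} (ht : 0 < t) :
    2 * Real.sinh t < t * (1 + Real.cosh t) := by
  have hs : 0 < t / 2 := by linarith
  have h1 := sinh_lt_mul_cosh hs
  have h2 : Real.sinh t = 2 * Real.sinh (t/2) * Real.cosh (t/2) := by
    rw [← Real.sinh_two_mul]; ring_nf
  have h3 : Real.cosh t = 2 * Real.cosh (t/2) ^ 2 - 1 := by
    have h4 : Real.cosh (2 * (t/2)) = Real.cosh (t/2) ^ 2 + Real.sinh (t/2) ^ 2 :=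
      Real.cosh_two_mul _
    have h5 : Real.cosh (t/2) ^ 2 = Real.sinh (t/2) ^ 2 + 1 := Real.cosh_sq _
    have h6 : (2:ℝ) * (t/2) = t := by ring
    rw [h6] at h4
    linarith
  have hc : 0 < Real.cosh (t/2) := Real.cosh_pos _
  rw [h2, h3]
  nlinarith

theorem only_zero_solution (x ε : ℝ) (hε : 0 ≤ ε) (y : ℝ)
    (hy : y = 2 * Real.exp (-ε) * Real.sinh y /
      (Real.exp ε * Real.cosh x + Real.exp (-ε) * Real.cosh y)) :
    y = 0 := by
  set D := Real.exp ε * Real.cosh x + Real.exp (-ε) * Real.cosh y with hD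
  have hDpos : 0 < D := by
    have := Real.exp_pos ε
    have := Real.exp_pos (-ε)
    have := Real.one_le_cosh x
    have := Real.one_le_cosh y
    nlinarith
  have heq : y * D = 2 * Real.exp (-ε) * Real.sinh y := by
    have h := hy.symm
    rw [div_eq_iff hDpos.ne'] at h
    linarith
  have hkey : Real.exp (-ε) ≤ Real.exp ε * Real.cosh x := by
    have h1 : Real.exp (-ε) ≤ Real.exp ε := Real.exp_le_exp.2 (by linarith)
    have h2 := Real.one_le_cosh x
    nlinarith [Real.exp_pos ε]
  by_contra hne
  rcases lt_or_gt_of_ne hne with hneg | hpos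
  · -- y < 0
    have h := two_sinh_lt (neg_pos.2 hneg)
    rw [Real.sinh_neg, Real.cosh_neg] at h
    have hexp := Real.exp_pos (-ε)
    nlinarith [Real.one_le_cosh y]
  · -- y > 0
    have h := two_sinh_lt hpos
    have hexp := Real.exp_pos (-ε)
    nlinarith [Real.one_le_cosh y]
end

section
/- There exists δ > 0 such that for all sufficiently small ε > 0, the equation x = 2e^ε sinh(x) / (e^ε cosh(x) + e^{-ε}) has a unique solution x_ε in the open interval (0, δ), and moreover |x_ε − √(12ε)| ≤ C·ε^{3/2} for some constant C independent of ε. -/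
/-!
Multiplying the equation by `e^ε` times its denominator turns it into `F(x) = 0` with
`F(x) = x + u (x cosh x - 2 sinh x)` and `u = e^{2ε}`. Since `F(0) = 0` and `F'' = u x cosh x > 0`
on `(0, ∞)`, `F` is strictly convex on `[0, ∞)` and has at most one positive zero. With
`s = √(12ε)`, so that `u = e^{s²/6}`, the expansion `x cosh x - 2 sinh x = -x + x³/6 + O(x⁵)`
gives `F(s - s³) < 0 < F(s + s³)`, and the intermediate value theorem places the zero within
`s³ = O(ε^{3/2})` of `s`.
-/

open Real Set

theorem StrictConvexOn.eq_of_apply_eq_of_ne {𝕜 : Type*} [Field 𝕜] [LinearOrder 𝕜]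
    [IsStrictOrderedRing 𝕜] {s : Set 𝕜} {f : 𝕜 → 𝕜} {a x y : 𝕜}
    (hf : StrictConvexOn 𝕜 s f) (ha : a ∈ s) (hx : x ∈ s) (hy : y ∈ s) (hxa : x ≠ a)
    (hya : y ≠ a) (hfx : f x = f a) (hfy : f y = f a) : x = y := by
  by_contra hxy
  rcases lt_or_gt_of_ne hxy with hxy | hyx
  · simpa [hfx, hfy] using hf.secant_strict_mono ha hx hy hxa hya hxy
  · simpa [hfx, hfy] using hf.secant_strict_mono ha hy hx hya hxa hyx

theorem exp_le_one_add_add_sq {x : ℝ} (hx : |x| ≤ 1) : exp x ≤ 1 + x + x ^ 2 := by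
  linarith [(abs_le.mp (abs_exp_sub_one_sub_id_le hx)).2]

theorem mul_cosh_sub_two_mul_sinh_mem_Icc {x : ℝ} (hx₀ : 0 ≤ x) (hx₁ : x ≤ 1) :
    x * cosh x - 2 * sinh x ∈ Icc (-x + x ^ 3 / 6) (-x + x ^ 3 / 6 + x ^ 5 / 30) := by
  have hexp := exp_bound (x := x) (by rwa [abs_of_nonneg hx₀]) (n := 6) (by norm_num)
  have hexp_neg :=
    exp_bound (x := -x) (by rwa [abs_neg, abs_of_nonneg hx₀]) (n := 6) (by norm_num)
  rw [abs_of_nonneg hx₀] at hexp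
  rw [abs_neg, abs_of_nonneg hx₀] at hexp_neg
  simp only [Finset.sum_range_succ, Finset.sum_range_zero] at hexp hexp_neg
  norm_num [Nat.factorial] at hexp hexp_neg
  rw [abs_le] at hexp hexp_neg
  -- `x cosh x - 2 sinh x = ((2 + x) e⁻ˣ - (2 - x) eˣ) / 2`, so weigh the two remainders by `2 ± x`.
  rw [cosh_eq, sinh_eq, mem_Icc]
  constructor <;> nlinarith [pow_nonneg hx₀ 5, pow_nonneg hx₀ 6,
    mul_le_mul_of_nonneg_left hexp.1 (by linarith : (0 : ℝ) ≤ 2 - x),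
    mul_le_mul_of_nonneg_left hexp.2 (by linarith : (0 : ℝ) ≤ 2 - x),
    mul_le_mul_of_nonneg_left hexp_neg.1 (by linarith : (0 : ℝ) ≤ 2 + x),
    mul_le_mul_of_nonneg_left hexp_neg.2 (by linarith : (0 : ℝ) ≤ 2 + x)]

theorem sqrt_twelve_mul_pow_three_le {ε : ℝ} (hε : 0 ≤ ε) :
    √(12 * ε) ^ 3 ≤ 42 * ε ^ ((3 : ℝ) / 2) := by
  have h12 : √12 ≤ 7 / 2 := by rw [sqrt_le_left (by norm_num)]; norm_num
  have hrpow : ε ^ ((3 : ℝ) / 2) = ε * √ε := by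
    rw [show (3 : ℝ) / 2 = 1 + 1 / 2 by norm_num, rpow_add' hε (by norm_num), rpow_one,
      sqrt_eq_rpow]
  calc √(12 * ε) ^ 3 = 12 * ε * (√12 * √ε) := by
        rw [pow_succ, sq_sqrt (by positivity), sqrt_mul (by norm_num)]
    _ ≤ 12 * ε * (7 / 2 * √ε) := by gcongr
    _ = 42 * ε ^ ((3 : ℝ) / 2) := by rw [hrpow]; ring

noncomputable def fixedPointResidual (u x : ℝ) : ℝ := x + u * (x * cosh x - 2 * sinh x)

theorem eq_div_iff_fixedPointResidual_eq_zero (ε x : ℝ) :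
    x = 2 * exp ε * sinh x / (exp ε * cosh x + exp (-ε)) ↔
      fixedPointResidual (exp (2 * ε)) x = 0 := by
  have hden : exp ε * cosh x + exp (-ε) ≠ 0 := by positivity
  have hresidual : fixedPointResidual (exp (2 * ε)) x =
      exp ε * (x * (exp ε * cosh x + exp (-ε)) - 2 * exp ε * sinh x) := by
    have hsq : exp ε * exp ε = exp (2 * ε) := by rw [← exp_add, two_mul]
    have hinv : exp ε * exp (-ε) = 1 := by rw [← exp_add, add_neg_cancel, exp_zero]
    rw [fixedPointResidual]
    linear_combination (2 * sinh x - x * cosh x) * hsq - x * hinv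
  rw [eq_div_iff hden, hresidual, mul_eq_zero, sub_eq_zero, eq_comm]
  simp [(exp_pos ε).ne']

theorem hasDerivAt_fixedPointResidual (u x : ℝ) :
    HasDerivAt (fixedPointResidual u) (1 + u * (x * sinh x - cosh x)) x :=
  ((hasDerivAt_id' x).add ((((hasDerivAt_id' x).mul (hasDerivAt_cosh x)).sub
    ((hasDerivAt_sinh x).const_mul 2)).const_mul u)).congr_deriv (by ring)

theorem continuous_fixedPointResidual (u : ℝ) : Continuous (fixedPointResidual u) :=
  continuous_iff_continuousAt.2 fun x ↦ (hasDerivAt_fixedPointResidual u x).continuousAt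

theorem strictConvexOn_fixedPointResidual {u : ℝ} (hu : 0 < u) :
    StrictConvexOn ℝ (Ici 0) (fixedPointResidual u) := by
  have hderiv : deriv (fixedPointResidual u) = fun x ↦ 1 + u * (x * sinh x - cosh x) :=
    funext fun x ↦ (hasDerivAt_fixedPointResidual u x).deriv
  refine StrictMonoOn.strictConvexOn_of_deriv (convex_Ici 0)
    (fun x _ ↦ (hasDerivAt_fixedPointResidual u x).continuousAt.continuousWithinAt) ?_
  rw [hderiv, interior_Ici]
  refine strictMonoOn_of_hasDerivWithinAt_pos (convex_Ioi 0) (by fun_prop)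
    (f' := fun x ↦ u * (x * cosh x)) (fun x _ ↦ ?_) fun x hx ↦ by
      rw [interior_Ioi] at hx; exact mul_pos hu (mul_pos hx (cosh_pos x))
  exact ((((hasDerivAt_id' x).mul (hasDerivAt_sinh x)).sub (hasDerivAt_cosh x)).const_mul u
    |>.const_add 1).hasDerivWithinAt.congr_deriv (by ring)

theorem fixedPointResidual_sub_cube_neg {s : ℝ} (hs₀ : 0 < s) (hs₁ : s ≤ 7 / 20) :
    fixedPointResidual (exp (s ^ 2 / 6)) (s - s ^ 3) < 0 := by
  have hs₂ : s ^ 2 ≤ 49 / 400 := by nlinarith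
  have ha₀ : 0 < s - s ^ 3 := by nlinarith [mul_pos hs₀ (by linarith : 0 < 1 - s ^ 2)]
  have has : s - s ^ 3 ≤ s := by linarith [pow_pos hs₀ 3]
  have ha₂ : (s - s ^ 3) ^ 2 ≤ s ^ 2 - 9 / 5 * s ^ 4 := by
    nlinarith [mul_le_mul_of_nonneg_left hs₂ (pow_nonneg hs₀.le 4)]
  set a := s - s ^ 3
  have ha₁ : a ≤ 1 := by linarith
  have hg := (mul_cosh_sub_two_mul_sinh_mem_Icc ha₀.le ha₁).2
  have hq : -a + a ^ 3 / 6 + a ^ 5 / 30 ≤ 0 := by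
    have : a ^ 2 / 6 + a ^ 4 / 30 ≤ 1 := by
      linarith [pow_le_one₀ ha₀.le ha₁ (n := 2), pow_le_one₀ ha₀.le ha₁ (n := 4)]
    nlinarith [mul_le_mul_of_nonneg_left this ha₀.le]
  have hu : 1 + s ^ 2 / 6 ≤ exp (s ^ 2 / 6) := by linarith [add_one_le_exp (s ^ 2 / 6)]
  have ha₄ : a ^ 4 ≤ s ^ 4 := pow_le_pow_left₀ ha₀.le has 4
  have hsum : a ^ 2 / 6 + a ^ 4 / 30 ≤ s ^ 2 / 6 - 4 / 15 * s ^ 4 := by linarith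
  calc fixedPointResidual (exp (s ^ 2 / 6)) a
      ≤ a + (1 + s ^ 2 / 6) * (-a + a ^ 3 / 6 + a ^ 5 / 30) := by
        rw [fixedPointResidual]; nlinarith [exp_pos (s ^ 2 / 6)]
    _ = a * ((1 + s ^ 2 / 6) * (a ^ 2 / 6 + a ^ 4 / 30) - s ^ 2 / 6) := by ring
    _ < 0 := mul_neg_of_pos_of_neg ha₀ (by
        nlinarith [mul_le_mul_of_nonneg_left hsum (by positivity : (0 : ℝ) ≤ 1 + s ^ 2 / 6),
          pow_pos hs₀ 4, pow_pos hs₀ 6])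

theorem fixedPointResidual_add_cube_pos {s : ℝ} (hs₀ : 0 < s) (hs₁ : s ≤ 7 / 20) :
    0 < fixedPointResidual (exp (s ^ 2 / 6)) (s + s ^ 3) := by
  have hb₁ : s + s ^ 3 ≤ 1 := by nlinarith [pow_le_pow_left₀ hs₀.le hs₁ 3]
  have hb₂ : s ^ 2 + 2 * s ^ 4 ≤ (s + s ^ 3) ^ 2 := by nlinarith [pow_pos hs₀ 6]
  set b := s + s ^ 3
  set u := exp (s ^ 2 / 6)
  have hb₀ : 0 < b := by positivity
  have hg := (mul_cosh_sub_two_mul_sinh_mem_Icc hb₀.le hb₁).1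
  have hu₁ : 1 ≤ u := one_le_exp (by positivity)
  have hu₂ : u ≤ 1 + s ^ 2 / 6 + (s ^ 2 / 6) ^ 2 :=
    exp_le_one_add_add_sq (by rw [abs_of_nonneg (by positivity)]; nlinarith)
  calc 0 < b * (b ^ 2 / 6 - s ^ 2 / 6 - s ^ 4 / 36) := mul_pos hb₀ (by linarith [pow_pos hs₀ 4])
    _ ≤ b * (1 - u + b ^ 2 / 6) := by gcongr; linarith
    _ ≤ b + u * (-b + b ^ 3 / 6) := by
        nlinarith [mul_nonneg (sub_nonneg.2 hu₁) (pow_pos hb₀ 3).le]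
    _ ≤ fixedPointResidual u b := by rw [fixedPointResidual]; gcongr

theorem exists_fixedPointResidual_eq_zero_mem_Ioo {s : ℝ} (hs₀ : 0 < s) (hs₁ : s ≤ 7 / 20) :
    ∃ x ∈ Ioo (s - s ^ 3) (s + s ^ 3), fixedPointResidual (exp (s ^ 2 / 6)) x = 0 :=
  intermediate_value_Ioo (by linarith [pow_pos hs₀ 3])
    (continuous_fixedPointResidual _).continuousOn
    ⟨fixedPointResidual_sub_cube_neg hs₀ hs₁, fixedPointResidual_add_cube_pos hs₀ hs₁⟩

theorem unique_solution_near_sqrt_12eps :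
    ∃ δ > (0:ℝ), ∃ C > (0:ℝ), ∃ ε₀ > (0:ℝ), ∀ ε : ℝ, 0 < ε → ε ≤ ε₀ →
      ∃ x : ℝ, (x ∈ Set.Ioo 0 δ ∧
          x = 2 * Real.exp ε * Real.sinh x /
            (Real.exp ε * Real.cosh x + Real.exp (-ε)) ∧
          |x - Real.sqrt (12 * ε)| ≤ C * ε ^ ((3:ℝ)/2)) ∧
        ∀ y ∈ Set.Ioo (0:ℝ) δ,
          y = 2 * Real.exp ε * Real.sinh y /
            (Real.exp ε * Real.cosh y + Real.exp (-ε)) → y = x := by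
  refine ⟨1, one_pos, 42, by norm_num, 1 / 100, by norm_num, fun ε hε hε₀ ↦ ?_⟩
  set s := √(12 * ε)
  have hs₀ : 0 < s := sqrt_pos.2 (by positivity)
  have hs₁ : s ≤ 7 / 20 := by rw [sqrt_le_left (by norm_num)]; linarith
  have hu : exp (2 * ε) = exp (s ^ 2 / 6) := by rw [sq_sqrt (by positivity)]; ring_nf
  simp only [eq_div_iff_fixedPointResidual_eq_zero, hu]
  obtain ⟨x, ⟨hxs, hsx⟩, hx⟩ := exists_fixedPointResidual_eq_zero_mem_Ioo hs₀ hs₁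
  have hx₀ : 0 < x := by nlinarith
  refine ⟨x, ⟨⟨hx₀, by nlinarith⟩, hx, ?_⟩, fun y ⟨hy₀, _⟩ hy ↦ ?_⟩
  · calc |x - s| ≤ s ^ 3 := abs_sub_le_iff.2 ⟨by linarith, by linarith⟩
      _ ≤ 42 * ε ^ ((3 : ℝ) / 2) := sqrt_twelve_mul_pow_three_le hε.le
  · have h₀ : fixedPointResidual (exp (s ^ 2 / 6)) 0 = 0 := by simp [fixedPointResidual]
    exact (strictConvexOn_fixedPointResidual (exp_pos _)).eq_of_apply_eq_of_ne self_mem_Ici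
      hy₀.le hx₀.le hy₀.ne' hx₀.ne' (hy.trans h₀.symm) (hx.trans h₀.symm)
end

section
/- Let X(n) be a two-dimensional nearest-neighbor random walk with jump probabilities p₁, q₁, p₂, q₂ (right, left, up, down) where p₁+q₁ > 0 and p₂+q₂ > 0, and let m* = (p₁−q₁, p₂−q₂). Then there is a constant c > 0 independent of n and of the admissible targets such that P(X(n) = m*·n) ≥ c·n^{−3/2} whenever m*·n is an attainable lattice point with the correct parity. -/
/-!
Choose step counts `k = (k₁, k₂, k₃, k₄)` (right, left, up, down) with `k₁ - k₂ = m*₁ n`,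
`k₃ - k₄ = m*₂ n` and `|kᵢ - n pᵢ| < 1`; the parity condition is exactly what makes this possible.
Every path with these counts ends at `m* n`, so the probability is at least the multinomial weight
`n! / ∏ kᵢ! * ∏ pᵢ ^ kᵢ`. Stirling's bounds `√(2πn) (n/e)ⁿ ≤ n!` and `k! ≤ e √k (k/e)ᵏ` reduce this
weight to `√(2πn) / (e √n)⁴ * ∏ (n pᵢ / kᵢ) ^ kᵢ`, and as `kᵢ` is within `1` of `n pᵢ` with
`∑ kᵢ = ∑ n pᵢ`, the last product is at least `exp (-∑ 1 / (n pᵢ))`.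
-/

open Finset Real MeasureTheory ProbabilityTheory Function
open scoped Nat

theorem Stirling.factorial_le_exp_one_mul_sqrt_mul_pow {k : ℕ} (hk : k ≠ 0) :
    (k ! : ℝ) ≤ exp 1 * √k * (k / exp 1) ^ k := by
  obtain ⟨j, rfl⟩ := Nat.exists_eq_succ_of_ne_zero hk
  have h : stirlingSeq (j + 1) ≤ exp 1 / √2 := by
    simpa [stirlingSeq_one] using stirlingSeq'_antitone (Nat.zero_le j)
  rw [stirlingSeq, div_le_iff₀ (by positivity), sqrt_mul' _ (by positivity)] at h
  calc _ ≤ _ := h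
    _ = _ := by push_cast; field_simp

theorem Real.exp_sub_sub_inv_le_div_pow {x : ℝ} {k : ℕ} (hx : 0 ≤ x) (hk : |k - x| < 1) :
    exp (x - k - x⁻¹) ≤ (x / k) ^ k := by
  rcases Nat.eq_zero_or_pos k with rfl | hk0
  · have hx1 : x < 1 := by simpa using (abs_lt.1 hk).1
    simp only [CharP.cast_eq_zero, sub_zero, pow_zero, exp_le_one_iff, sub_nonpos]
    rcases hx.eq_or_lt with rfl | hx0
    · simp
    · exact hx1.le.trans (one_le_inv₀ hx0 |>.2 hx1.le)
  have hkpos : (0 : ℝ) < k := by exact_mod_cast hk0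
  have hxpos : 0 < x := by linarith [(abs_lt.1 hk).2, (Nat.one_le_cast.2 hk0 : (1 : ℝ) ≤ k)]
  rw [← rpow_natCast, rpow_def_of_pos (by positivity), exp_le_exp]
  have hlog : 1 - k / x ≤ log (x / k) := by
    have := log_le_sub_one_of_pos (div_pos hkpos hxpos)
    rw [← inv_div, log_inv, inv_div] at this
    linarith
  have hsq : (k - x) ^ 2 ≤ 1 := by nlinarith [abs_lt.1 hk]
  calc x - k - x⁻¹ ≤ k * (1 - k / x) := by
        have : k * (1 - k / x) - (x - k - x⁻¹) = (1 - (k - x) ^ 2) / x := by field_simp; ring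
        rw [← sub_nonneg, this]
        exact div_nonneg (by linarith) hxpos.le
    _ ≤ log (x / k) * k := by rw [mul_comm]; exact mul_le_mul_of_nonneg_right hlog hkpos.le

theorem exp_sub_sub_inv_div_le_pow_div_factorial {x : ℝ} {k n : ℕ} (hx : 0 ≤ x)
    (hk : |k - x| < 1) (hkn : k ≤ n) (hn : n ≠ 0) :
    exp (x - k - x⁻¹) / (exp 1 * √n) ≤ (x / exp 1) ^ k / k ! := by
  have hfac : (k ! : ℝ) ≤ exp 1 * √n * (k / exp 1) ^ k := by
    rcases eq_or_ne k 0 with rfl | hk0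
    · have : (1 : ℝ) ≤ √n := one_le_sqrt.2 (by exact_mod_cast Nat.one_le_iff_ne_zero.2 hn)
      simpa using one_le_mul_of_one_le_of_one_le (one_le_exp zero_le_one) this
    · calc _ ≤ exp 1 * √k * (k / exp 1) ^ k := Stirling.factorial_le_exp_one_mul_sqrt_mul_pow hk0
        _ ≤ _ := by gcongr
  calc exp (x - k - x⁻¹) / (exp 1 * √n) ≤ (x / k) ^ k / (exp 1 * √n) := by
        gcongr; exact exp_sub_sub_inv_le_div_pow hx hk
    _ = (x / exp 1) ^ k / (exp 1 * √n * (k / exp 1) ^ k) := by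
        rw [div_mul_eq_div_div_swap ((x / exp 1) ^ k), ← div_pow,
          div_div_div_cancel_right₀ (exp_pos 1).ne']
    _ ≤ (x / exp 1) ^ k / k ! := by gcongr

theorem le_multinomial_mul_prod_pow {ι : Type*} [Fintype ι] {p : ι → ℝ} (hp : ∀ i, 0 ≤ p i)
    (hp1 : ∑ i, p i = 1) {n : ℕ} (hn : n ≠ 0) {k : ι → ℕ} (hk : ∑ i, k i = n)
    (hkp : ∀ i, |(k i : ℝ) - n * p i| < 1) :
    √(2 * π) * exp (-Fintype.card ι - ∑ i, (p i)⁻¹) *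
        (n : ℝ) ^ (-((Fintype.card ι : ℝ) - 1) / 2) ≤
      Nat.multinomial univ k * ∏ i, p i ^ k i := by
  set c := Fintype.card ι
  have hn1 : (1 : ℝ) ≤ n := by exact_mod_cast Nat.one_le_iff_ne_zero.2 hn
  have hnpos : (0 : ℝ) < n := by linarith
  have hkn : ∀ i, k i ≤ n := fun i ↦ hk ▸ single_le_sum (fun j _ ↦ Nat.zero_le (k j)) (mem_univ i)
  have hsplit : (Nat.multinomial univ k : ℝ) * ∏ i, p i ^ k i =
      n ! / (n / exp 1) ^ n * ∏ i, (n * p i / exp 1) ^ k i / (k i)! := by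
    have hspec : (∏ i, ((k i)! : ℝ)) * Nat.multinomial univ k = n ! := by
      exact_mod_cast hk ▸ Nat.multinomial_spec univ k
    simp_rw [prod_div_distrib, mul_div_right_comm _ (p _), mul_pow, prod_mul_distrib,
      prod_pow_eq_pow_sum, hk, ← hspec]
    field_simp
  have hexp : exp (-∑ i, (p i)⁻¹) ≤ ∏ i, exp (n * p i - k i - (n * p i)⁻¹) := by
    have hkr : ∑ i, (k i : ℝ) = n := by exact_mod_cast hk
    rw [← exp_sum, exp_le_exp, sum_sub_distrib, sum_sub_distrib, ← mul_sum, hp1, hkr, mul_one,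
      sub_self, zero_sub]
    refine neg_le_neg (sum_le_sum fun i _ ↦ ?_)
    rw [mul_inv]
    exact mul_le_of_le_one_left (inv_nonneg.2 (hp i)) (inv_le_one_of_one_le₀ hn1)
  have hrpow : √(2 * π) * exp (-c - ∑ i, (p i)⁻¹) * (n : ℝ) ^ (-((c : ℝ) - 1) / 2) =
      √(2 * π * n) * (exp (-∑ i, (p i)⁻¹) / (exp 1 * √n) ^ c) := by
    have h₁ : (n : ℝ) ^ (-((c : ℝ) - 1) / 2) = √n / √n ^ c := by
      rw [sqrt_eq_rpow, ← rpow_natCast, ← rpow_mul hnpos.le, ← rpow_sub hnpos]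
      ring_nf
    have h₂ : exp (-c - ∑ i, (p i)⁻¹) = exp (-∑ i, (p i)⁻¹) / exp 1 ^ c := by
      rw [← exp_nat_mul, ← exp_sub]; ring_nf
    rw [h₁, h₂, sqrt_mul' _ hnpos.le, mul_pow]
    field_simp
  calc _ = √(2 * π * n) * (exp (-∑ i, (p i)⁻¹) / (exp 1 * √n) ^ c) := hrpow
    _ ≤ √(2 * π * n) * ∏ i, exp (n * p i - k i - (n * p i)⁻¹) / (exp 1 * √n) := by
        rw [prod_div_distrib, prod_const, card_univ]
        gcongr
    _ ≤ n ! / (n / exp 1) ^ n * ∏ i, (n * p i / exp 1) ^ k i / (k i)! := by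
        gcongr ?_ * ?_
        · exact (le_div_iff₀ (by positivity)).2 (Stirling.le_factorial_stirling n)
        · exact prod_le_prod (fun i _ ↦ by positivity) fun i _ ↦
            exp_sub_sub_inv_div_le_pow_div_factorial (mul_nonneg hnpos.le (hp i))
              (by simpa using hkp i) (hkn i) hn
    _ = _ := hsplit.symm

namespace Fintype

variable {ι κ : Type*} [Fintype ι] [Fintype κ] [DecidableEq κ]

@[to_additive]
theorem prod_comp_eq_prod_pow_card_fiber {M : Type*} [CommMonoid M] (a : κ → M) (g : ι → κ) :
    ∏ j, a (g j) = ∏ i, a i ^ #{j | g j = i} := by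
  rw [← prod_fiberwise_of_maps_to' (t := univ) (fun j _ ↦ mem_univ (g j))]
  simp only [prod_const]

theorem card_filter_card_fiber_eq_multinomial {n : ℕ} {k : κ → ℕ} (hk : ∑ i, k i = n) :
    #{g : Fin n → κ | ∀ i, #{j | g j = i} = k i} = Nat.multinomial univ k := by
  -- compare the coefficients of `∏ i, X i ^ k i` in two expansions of `(∑ i, X i) ^ n`
  have h := MvPolynomial.coeff_sum_X_pow_of_fintype (R := ℕ) (Finsupp.equivFunOnFinite.symm k) n
  rw [Fintype.sum_pow, MvPolynomial.coeff_sum] at h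
  simp_rw [prod_comp_eq_prod_pow_card_fiber, MvPolynomial.coeff_prod_X_pow] at h
  rw [Finsupp.sum_fintype _ _ (fun _ ↦ rfl), if_pos (by simpa using hk),
    ← Finsupp.multinomial_of_support_subset (subset_univ _), sum_boole] at h
  simpa [Finsupp.ext_iff, Finsupp.indicator_apply, eq_comm] using h

theorem sum_filter_card_fiber_prod_eq_multinomial_mul {R : Type*} [CommSemiring R] (a : κ → R)
    {n : ℕ} {k : κ → ℕ} (hk : ∑ i, k i = n) :
    ∑ g : Fin n → κ with ∀ i, #{j | g j = i} = k i, ∏ j, a (g j) =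
      Nat.multinomial univ k * ∏ i, a i ^ k i := by
  calc _ = ∑ g : Fin n → κ with ∀ i, #{j | g j = i} = k i, ∏ i, a i ^ k i :=
        Finset.sum_congr rfl fun g hg ↦ by
          rw [prod_comp_eq_prod_pow_card_fiber]
          exact Finset.prod_congr rfl fun i _ ↦ by rw [(mem_filter.1 hg).2 i]
    _ = _ := by rw [Finset.sum_const, card_filter_card_fiber_eq_multinomial hk, nsmul_eq_mul]

end Fintype

section RandomWalk

variable {Ω α ι : Type*} [MeasurableSpace Ω] [MeasurableSpace α] [MeasurableSingletonClass α]
  [AddCommMonoid α] {μ : Measure Ω} {ξ : ℕ → Ω → α}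

theorem sum_prod_measure_le_measure_sum_range_eq (hmeas : ∀ i, Measurable (ξ i))
    (hindep : iIndepFun ξ μ) {e : ι → α} (he : Injective e) {n : ℕ} {v : α}
    (W : Finset (Fin n → ι)) (hW : ∀ g ∈ W, ∑ j, e (g j) = v) :
    ∑ g ∈ W, ∏ j : Fin n, μ (ξ j ⁻¹' {e (g j)}) ≤ μ {ω | ∑ i ∈ range n, ξ i ω = v} := by
  set E : (Fin n → ι) → Set Ω := fun g ↦ ⋂ j ∈ (univ : Finset (Fin n)), ξ j ⁻¹' {e (g j)}
  have hE : ∀ g, μ (E g) = ∏ j : Fin n, μ (ξ j ⁻¹' {e (g j)}) := fun g ↦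
    (hindep.precomp Fin.val_injective).measure_inter_preimage_eq_mul univ
      fun j _ ↦ measurableSet_singleton _
  have hdisj : Set.PairwiseDisjoint (W : Set (Fin n → ι)) E := by
    intro g _ g' _ hne
    refine Set.disjoint_left.2 fun ω hω hω' ↦ hne (funext fun j ↦ he ?_)
    simp only [E, Set.mem_iInter, Set.mem_preimage, Set.mem_singleton_iff] at hω hω'
    rw [← hω j (mem_univ j), hω' j (mem_univ j)]
  have hsub : ∀ g ∈ W, E g ⊆ {ω | ∑ i ∈ range n, ξ i ω = v} := by
    intro g hg ω hω
    simp only [E, Set.mem_iInter, Set.mem_preimage, Set.mem_singleton_iff] at hω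
    rw [Set.mem_ofPred_eq, ← Fin.sum_univ_eq_sum_range (ξ · ω), ← hW g hg]
    exact sum_congr rfl fun j _ ↦ hω j (mem_univ j)
  calc ∑ g ∈ W, ∏ j : Fin n, μ (ξ j ⁻¹' {e (g j)}) = μ (⋃ g ∈ W, E g) := by
        rw [measure_biUnion_finset hdisj fun g _ ↦ .biInter (Set.to_countable _)
          fun j _ ↦ hmeas j (measurableSet_singleton _)]
        simp_rw [hE]
    _ ≤ _ := measure_mono (Set.iUnion₂_subset hsub)

theorem ofReal_multinomial_mul_prod_le_measure_sum_range_eq [Fintype ι] [DecidableEq ι]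
    (hmeas : ∀ i, Measurable (ξ i)) (hindep : iIndepFun ξ μ) {e : ι → α} (he : Injective e)
    {p : ι → ℝ} (hp : ∀ i, 0 ≤ p i) (hd : ∀ j i, μ (ξ j ⁻¹' {e i}) = ENNReal.ofReal (p i))
    {n : ℕ} {k : ι → ℕ} (hk : ∑ i, k i = n) :
    ENNReal.ofReal (Nat.multinomial univ k * ∏ i, p i ^ k i) ≤
      μ {ω | ∑ i ∈ range n, ξ i ω = ∑ i, k i • e i} := by
  refine le_trans (le_of_eq ?_) (sum_prod_measure_le_measure_sum_range_eq hmeas hindep he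
    {g : Fin n → ι | ∀ i, #{j | g j = i} = k i} fun g hg ↦ ?_)
  · simp_rw [hd]
    rw [Fintype.sum_filter_card_fiber_prod_eq_multinomial_mul (fun i ↦ ENNReal.ofReal (p i)) hk,
      ENNReal.ofReal_mul (by positivity), ENNReal.ofReal_natCast,
      ENNReal.ofReal_prod_of_nonneg fun i _ ↦ pow_nonneg (hp i) _]
    simp_rw [ENNReal.ofReal_pow (hp _)]
  · rw [Fintype.sum_comp_eq_sum_nsmul_card_fiber]
    exact sum_congr rfl fun i _ ↦ by rw [(mem_filter.1 hg).2 i]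

end RandomWalk

theorem exists_step_counts_near_mean {p₁ q₁ p₂ q₂ : ℝ} (hp₁ : 0 ≤ p₁) (hq₁ : 0 ≤ q₁)
    (hp₂ : 0 ≤ p₂) (hq₂ : 0 ≤ q₂) (hsum : p₁ + q₁ + p₂ + q₂ = 1) {n : ℕ} {v : ℤ × ℤ}
    (hx : (v.1 : ℝ) = (p₁ - q₁) * n) (hy : (v.2 : ℝ) = (p₂ - q₂) * n)
    (hpar : (v.1 + v.2) % 2 = (n : ℤ) % 2) :
    ∃ k : Fin 4 → ℕ, ∑ i, k i = n ∧ (∀ i, |(k i : ℝ) - n * ![p₁, q₁, p₂, q₂] i| < 1) ∧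
      ∑ i, k i • ![((1 : ℤ), (0 : ℤ)), (-1, 0), (0, 1), (0, -1)] i = v := by
  -- `m = n (p₁ + p₂)` is an integer by the parity condition, and the counts are
  -- `⌊n p₁⌋, ⌊n q₁⌋, ⌈n p₂⌉, ⌈n q₂⌉`.
  obtain ⟨m, hm⟩ : ∃ m : ℤ, n + v.1 + v.2 = 2 * m := ⟨(n + v.1 + v.2) / 2, by omega⟩
  set a := ⌊n * p₁⌋
  set z : Fin 4 → ℤ := ![a, a - v.1, m - a, m - a - v.2]
  have hz : ∀ i, |(z i : ℝ) - n * ![p₁, q₁, p₂, q₂] i| < 1 := by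
    have h₁ := Int.floor_le ((n : ℝ) * p₁)
    have h₂ := Int.lt_floor_add_one ((n : ℝ) * p₁)
    have hm' : (n : ℝ) + v.1 + v.2 = 2 * m := by exact_mod_cast hm
    have hn : (n : ℝ) * p₁ + n * q₁ + n * p₂ + n * q₂ = n := by linear_combination (n : ℝ) * hsum
    intro i
    fin_cases i <;> simp [z, abs_lt] <;> constructor <;> linarith
  have hz₀ : ∀ i, 0 ≤ z i := by
    intro i
    have hpi : 0 ≤ ![p₁, q₁, p₂, q₂] i := by fin_cases i <;> assumption
    have : (-1 : ℝ) < z i := by linarith [(abs_lt.1 (hz i)).1, mul_nonneg n.cast_nonneg hpi]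
    have : (-1 : ℤ) < z i := by exact_mod_cast this
    omega
  have hcast : ∀ i, ((z i).toNat : ℤ) = z i := fun i ↦ Int.toNat_of_nonneg (hz₀ i)
  refine ⟨fun i ↦ (z i).toNat, ?_, fun i ↦ ?_, ?_⟩
  · zify
    simp [Fin.sum_univ_four, hcast, z]
    omega
  · have : (((z i).toNat : ℕ) : ℝ) = z i := by exact_mod_cast hcast i
    simpa [this] using hz i
  · ext <;> simp [Fin.sum_univ_four, hcast] <;> simp [z]

theorem rw_local_lower_bound_general
    {Ω : Type*} [MeasurableSpace Ω] (μ : Measure Ω)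
    (p₁ q₁ p₂ q₂ : ℝ) (hp₁ : 0 ≤ p₁) (hq₁ : 0 ≤ q₁) (hp₂ : 0 ≤ p₂) (hq₂ : 0 ≤ q₂)
    (hsum : p₁ + q₁ + p₂ + q₂ = 1)
    (ξ : ℕ → Ω → ℤ × ℤ) (hmeas : ∀ i, Measurable (ξ i))
    (hindep : iIndepFun ξ μ)
    (hd₁ : ∀ i, μ (ξ i ⁻¹' {((1 : ℤ), (0 : ℤ))}) = ENNReal.ofReal p₁)
    (hd₂ : ∀ i, μ (ξ i ⁻¹' {((-1 : ℤ), (0 : ℤ))}) = ENNReal.ofReal q₁)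
    (hd₃ : ∀ i, μ (ξ i ⁻¹' {((0 : ℤ), (1 : ℤ))}) = ENNReal.ofReal p₂)
    (hd₄ : ∀ i, μ (ξ i ⁻¹' {((0 : ℤ), (-1 : ℤ))}) = ENNReal.ofReal q₂) :
    ∃ c > (0:ℝ), ∀ n : ℕ, 1 ≤ n → ∀ v : ℤ × ℤ,
      (v.1 : ℝ) = (p₁ - q₁) * n → (v.2 : ℝ) = (p₂ - q₂) * n →
      |p₁ - q₁| ≤ 1 - 2 / n → |p₂ - q₂| ≤ 1 - 2 / n →
      (v.1 + v.2) % 2 = (n : ℤ) % 2 →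
      μ {ω | (∑ i ∈ Finset.range n, ξ i ω) = v} ≥
        ENNReal.ofReal (c * (n : ℝ) ^ (-(3:ℝ)/2)) := by
  set p : Fin 4 → ℝ := ![p₁, q₁, p₂, q₂]
  set e : Fin 4 → ℤ × ℤ := ![(1, 0), (-1, 0), (0, 1), (0, -1)]
  have hp : ∀ i, 0 ≤ p i := by intro i; fin_cases i <;> assumption
  have hp1 : ∑ i, p i = 1 := by simp [p, Fin.sum_univ_four, hsum]
  have hd : ∀ j i, μ (ξ j ⁻¹' {e i}) = ENNReal.ofReal (p i) := by
    intro j i; fin_cases i <;> simp [p, e, hd₁, hd₂, hd₃, hd₄]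
  have he : Injective e := by decide
  refine ⟨√(2 * π) * exp (-Fintype.card (Fin 4) - ∑ i, (p i)⁻¹), by positivity,
    fun n hn v hx hy _ _ hpar ↦ ?_⟩
  obtain ⟨k, hk, hkp, rfl⟩ := exists_step_counts_near_mean hp₁ hq₁ hp₂ hq₂ hsum hx hy hpar
  rw [ge_iff_le, show -(3 : ℝ) / 2 = -((Fintype.card (Fin 4) : ℝ) - 1) / 2 by norm_num]
  exact (ENNReal.ofReal_le_ofReal (le_multinomial_mul_prod_pow hp hp1 (by omega) hk hkp)).trans
    (ofReal_multinomial_mul_prod_le_measure_sum_range_eq hmeas hindep he hp hd hk)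

theorem rw_local_lower_bound
    {Ω : Type*} [MeasurableSpace Ω] (μ : Measure Ω) [IsProbabilityMeasure μ]
    (p₁ q₁ p₂ q₂ : ℝ) (hp₁ : 0 ≤ p₁) (hq₁ : 0 ≤ q₁) (hp₂ : 0 ≤ p₂) (hq₂ : 0 ≤ q₂)
    (hsum : p₁ + q₁ + p₂ + q₂ = 1) (hh : 0 < p₁ + q₁) (hv : 0 < p₂ + q₂)
    (ξ : ℕ → Ω → ℤ × ℤ) (hmeas : ∀ i, Measurable (ξ i))
    (hindep : iIndepFun ξ μ)
    (hrange : ∀ i ω, ξ i ω ∈ ({(1, 0), (-1, 0), (0, 1), (0, -1)} : Set (ℤ × ℤ)))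
    (hd₁ : ∀ i, μ (ξ i ⁻¹' {((1 : ℤ), (0 : ℤ))}) = ENNReal.ofReal p₁)
    (hd₂ : ∀ i, μ (ξ i ⁻¹' {((-1 : ℤ), (0 : ℤ))}) = ENNReal.ofReal q₁)
    (hd₃ : ∀ i, μ (ξ i ⁻¹' {((0 : ℤ), (1 : ℤ))}) = ENNReal.ofReal p₂)
    (hd₄ : ∀ i, μ (ξ i ⁻¹' {((0 : ℤ), (-1 : ℤ))}) = ENNReal.ofReal q₂) :
    ∃ c > (0:ℝ), ∀ n : ℕ, 1 ≤ n → ∀ v : ℤ × ℤ,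
      (v.1 : ℝ) = (p₁ - q₁) * n → (v.2 : ℝ) = (p₂ - q₂) * n →
      |p₁ - q₁| ≤ 1 - 2 / n → |p₂ - q₂| ≤ 1 - 2 / n →
      (v.1 + v.2) % 2 = (n : ℤ) % 2 →
      μ {ω | (∑ i ∈ Finset.range n, ξ i ω) = v} ≥
        ENNReal.ofReal (c * (n : ℝ) ^ (-(3:ℝ)/2)) :=
  rw_local_lower_bound_general μ p₁ q₁ p₂ q₂ hp₁ hq₁ hp₂ hq₂ hsum ξ hmeas hindep hd₁ hd₂ hd₃ hd₄
end

section
/- At the minimizer of the two-layer free energy, with m_- = 0, the quantity 2G_{++} = 2e^ε (e^ε + e^{-ε}cosh(h_+)) / (e^ε cosh(h_+) + e^{-ε})² satisfies 2G_{++} ≤ 2e^ε/(e^ε cosh(h_+) + e^{-ε}), and if additionally h_+² ≥ 8ε then for all sufficiently small ε > 0 one has 2G_{++} ≤ 1 − ε/2. -/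
lemma cosh_ge_one_add_sq_half (x : ℝ) : 1 + x ^ 2 / 2 ≤ Real.cosh x := by
  have h1 : |x| / 2 ≤ Real.sinh (|x| / 2) :=
    Real.self_le_sinh_iff.2 (by positivity)
  have h2 : Real.cosh |x| = Real.cosh (|x|/2) ^ 2 + Real.sinh (|x|/2) ^ 2 := by
    rw [← Real.cosh_two_mul]; ring_nf
  have h3 : Real.cosh (|x|/2) ^ 2 = Real.sinh (|x|/2) ^ 2 + 1 := Real.cosh_sq _
  have h4 : (|x|/2) ^ 2 ≤ Real.sinh (|x|/2) ^ 2 := by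
    have := abs_nonneg x
    nlinarith
  have h5 : |x| ^ 2 = x ^ 2 := sq_abs x
  calc 1 + x ^ 2 / 2 ≤ Real.cosh |x| := by rw [h2, h3]; nlinarith
    _ = Real.cosh x := Real.cosh_abs x

theorem Gpp_bound :
    ∃ ε₀ > (0:ℝ), ∀ ε : ℝ, 0 < ε → ε ≤ ε₀ → ∀ h : ℝ,
      (2 * Real.exp ε * (Real.exp ε + Real.exp (-ε) * Real.cosh h) /
          (Real.exp ε * Real.cosh h + Real.exp (-ε)) ^ 2 ≤
        2 * Real.exp ε / (Real.exp ε * Real.cosh h + Real.exp (-ε))) ∧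
      (h ^ 2 ≥ 8 * ε →
        2 * Real.exp ε * (Real.exp ε + Real.exp (-ε) * Real.cosh h) /
            (Real.exp ε * Real.cosh h + Real.exp (-ε)) ^ 2 ≤ 1 - ε / 2) := by
  refine ⟨1/2, by norm_num, fun ε hε hε₀ h => ?_⟩
  have hc : 1 ≤ Real.cosh h := Real.one_le_cosh h
  have hep : 0 < Real.exp ε := Real.exp_pos _
  have hem : 0 < Real.exp (-ε) := Real.exp_pos _
  have hee : Real.exp (-ε) ≤ Real.exp ε := Real.exp_le_exp.2 (by linarith)
  have hD : 0 < Real.exp ε * Real.cosh h + Real.exp (-ε) := by positivity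
  have h1 : 2 * Real.exp ε * (Real.exp ε + Real.exp (-ε) * Real.cosh h) /
        (Real.exp ε * Real.cosh h + Real.exp (-ε)) ^ 2 ≤
      2 * Real.exp ε / (Real.exp ε * Real.cosh h + Real.exp (-ε)) := by
    rw [div_le_div_iff₀ (by positivity) hD]
    have key : 0 ≤ (Real.exp ε - Real.exp (-ε)) * (Real.cosh h - 1) :=
      mul_nonneg (by linarith) (by linarith)
    nlinarith [mul_nonneg (mul_nonneg key hep.le) hD.le, mul_pos hep hD]
  refine ⟨h1, fun hh => ?_⟩
  refine h1.trans ?_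
  rw [div_le_iff₀ hD]
  have hc2 : 1 + 4 * ε ≤ Real.cosh h := by
    have := cosh_ge_one_add_sq_half h
    linarith
  have hx : Real.exp ε * Real.exp (-2*ε) = Real.exp (-ε) := by
    rw [← Real.exp_add]; ring_nf
  have hexp : (-2*ε) + 1 ≤ Real.exp (-2*ε) := Real.add_one_le_exp _
  nlinarith [mul_nonneg hep.le (sub_nonneg.2 hc2),
    mul_nonneg hep.le (by linarith : (0:ℝ) ≤ Real.exp (-2*ε) - (1 - 2*ε)),
    mul_pos hε hep, mul_nonneg (mul_nonneg hε.le hε.le) hep.le,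
    mul_nonneg (mul_nonneg hε.le hep.le) (sub_nonneg.2 hc2)]
end
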